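/- arXiv:1302.5991 — 2 statements merged into one kernel-verified Lean document; each statement's English description precedes it below -/
import Mathlib

section
/- If N = q^k * n^2 is an odd perfect number in Eulerian form and σ(n) ≤ σ(q), then k = 1. -/
/-!
Since `σ(q^k) = 1 + q + ⋯ + q^k ≡ 1 (mod q)` is coprime to `q^k`, the identity
`σ(q^k) σ(n²) = 2 q^k n²` forces `σ(q^k) ∣ 2n²`, so `q^k ≤ σ(q^k) ≤ 2n²`. On the other hand
`n ≤ σ(n) ≤ σ(q) = q + 1`, whence `q^k ≤ 2(q + 1)² < q^5`. Thus `k < 5`, and `k ≡ 1 (mod 4)`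
leaves only `k = 1`.
-/

/-- The sum-of-divisors function. -/
def sigma (n : ℕ) : ℕ := ∑ d ∈ n.divisors, d

/-- The abundancy index as a rational number. -/
noncomputable def Iq (x : ℕ) : ℚ := (sigma x : ℚ) / x

/-- The abundancy index as a real number. -/
noncomputable def Ir (x : ℕ) : ℝ := (sigma x : ℝ) / x

theorem le_sigma {n : ℕ} (hn : n ≠ 0) : n ≤ sigma n :=
  Finset.single_le_sum (f := id) (fun _ _ => Nat.zero_le _) (Nat.mem_divisors_self n hn)

theorem sigma_prime {p : ℕ} (hp : p.Prime) : sigma p = p + 1 :=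
  hp.sum_divisors

theorem sigma_prime_pow {p : ℕ} (hp : p.Prime) (k : ℕ) :
    sigma (p ^ k) = ∑ j ∈ Finset.range (k + 1), p ^ j :=
  Nat.sum_divisors_prime_pow hp

theorem pow_le_sigma_prime_pow {p : ℕ} (hp : p.Prime) (k : ℕ) : p ^ k ≤ sigma (p ^ k) :=
  le_sigma (pow_ne_zero k hp.ne_zero)

theorem coprime_sigma_prime_pow {p : ℕ} (hp : p.Prime) (k : ℕ) : (sigma (p ^ k)).Coprime p := by
  obtain ⟨s, hs⟩ : p ∣ ∑ j ∈ Finset.range k, p ^ (j + 1) :=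
    Finset.dvd_sum fun j _ => dvd_pow_self p j.succ_ne_zero
  rw [sigma_prime_pow hp, Finset.sum_range_succ', hs, pow_zero]
  exact (Nat.coprime_mul_left_add_left 1 p s).mpr (Nat.coprime_one_left p)

theorem sigma_mul_of_coprime {m n : ℕ} (h : m.Coprime n) : sigma (m * n) = sigma m * sigma n :=
  Nat.Coprime.sum_divisors_mul h

theorem ne_zero_of_prime_coprime {p m : ℕ} (hp : p.Prime) (h : p.Coprime m) : m ≠ 0 := by
  rintro rfl
  exact hp.ne_one (Nat.coprime_zero_right p |>.mp h)

theorem sigma_prime_pow_dvd_two_mul_of_perfect {p k m : ℕ} (hp : p.Prime) (hpm : p.Coprime m)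
    (hperf : sigma (p ^ k * m) = 2 * (p ^ k * m)) : sigma (p ^ k) ∣ 2 * m := by
  have hdvd : sigma (p ^ k) ∣ p ^ k * (2 * m) :=
    ⟨sigma m, by rw [← sigma_mul_of_coprime (hpm.pow_left k), hperf]; ring⟩
  exact ((coprime_sigma_prime_pow hp k).pow_right k).dvd_of_dvd_mul_left hdvd

theorem pow_le_two_mul_of_perfect {p k m : ℕ} (hp : p.Prime) (hpm : p.Coprime m)
    (hperf : sigma (p ^ k * m) = 2 * (p ^ k * m)) : p ^ k ≤ 2 * m := by
  have hm : m ≠ 0 := ne_zero_of_prime_coprime hp hpm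
  exact (pow_le_sigma_prime_pow hp k).trans
    (Nat.le_of_dvd (by positivity) (sigma_prime_pow_dvd_two_mul_of_perfect hp hpm hperf))

theorem two_mul_sq_succ_lt_pow_five {q : ℕ} (hq : 2 ≤ q) : 2 * (q + 1) ^ 2 < q ^ 5 := by
  have h8 : 8 ≤ q ^ 3 := by simpa using pow_le_pow_left₀ (Nat.zero_le 2) hq 3
  calc 2 * (q + 1) ^ 2 < 8 * q ^ 2 := by nlinarith
    _ ≤ q ^ 3 * q ^ 2 := by gcongr
    _ = q ^ 5 := by ring

theorem stmt1_general (q k n N : ℕ)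
    (hq : Nat.Prime q) (hk4 : k % 4 = 1)
    (hco : Nat.Coprime q n) (hN : N = q ^ k * n ^ 2)
    (hperf : sigma N = 2 * N) (h : sigma n ≤ sigma q) :
    k = 1 := by
  subst hN
  have hnq : n ≤ q + 1 :=
    (le_sigma (ne_zero_of_prime_coprime hq hco)).trans (h.trans (sigma_prime hq).le)
  have hk : q ^ k < q ^ 5 := calc
    q ^ k ≤ 2 * n ^ 2 := pow_le_two_mul_of_perfect hq (hco.pow_right 2) hperf
    _ ≤ 2 * (q + 1) ^ 2 := by gcongr
    _ < q ^ 5 := two_mul_sq_succ_lt_pow_five hq.two_le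
  have hk5 : k < 5 := (Nat.pow_lt_pow_iff_right hq.one_lt).mp hk
  omega

theorem stmt1 (q k n N : ℕ)
    (hq : Nat.Prime q) (hq4 : q % 4 = 1) (hk4 : k % 4 = 1)
    (hco : Nat.Coprime q n) (hN : N = q ^ k * n ^ 2)
    (hodd : Odd N) (hperf : sigma N = 2 * N) (h : sigma n ≤ sigma q) :
    k = 1 :=
  stmt1_general q k n N hq hk4 hco hN hperf h
end

section
/- If N = q^k * n^2 is an odd perfect number in Eulerian form with k = 1, then I(q)·I(n) > 3/2^(1/3) − 1, where I(x) = σ(x)/x. -/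
lemma sigma_mul_le (a b : ℕ) : sigma (a * b) ≤ sigma a * sigma b := by
  rw [sigma, sigma, sigma, Nat.divisors_mul, Finset.mul_def, Finset.sum_mul_sum,
    ← Finset.sum_product']
  exact Finset.sum_image_le_of_nonneg fun _ _ => Nat.zero_le _

lemma lt_sigma {m : ℕ} (hm : 1 < m) : m < sigma m := by
  rw [sigma, Nat.sum_divisors_eq_sum_properDivisors_add_self]
  have h1 : 1 ≤ ∑ i ∈ m.properDivisors, i :=
    Finset.single_le_sum (f := fun i => i) (fun _ _ => Nat.zero_le _) (Nat.one_mem_properDivisors_iff_one_lt.2 hm)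
  omega

lemma one_lt_Ir {m : ℕ} (hm : 1 < m) : 1 < Ir m :=
  (one_lt_div (by positivity)).2 (by exact_mod_cast lt_sigma hm)

lemma Ir_mul_of_coprime {a b : ℕ} (h : Nat.Coprime a b) : Ir (a * b) = Ir a * Ir b := by
  rw [Ir, Ir, Ir, sigma, sigma, sigma, h.sum_divisors_mul]
  push_cast
  exact mul_div_mul_comm _ _ _ _

lemma Ir_sq_le (m : ℕ) : Ir (m ^ 2) ≤ Ir m ^ 2 := by
  have h : sigma (m ^ 2) ≤ sigma m ^ 2 := by simpa only [sq] using sigma_mul_le m m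
  rw [Ir, Ir, div_pow]
  push_cast
  gcongr
  exact_mod_cast h

lemma Ir_eq_two_of_sigma_eq {N : ℕ} (hN : N ≠ 0) (h : sigma N = 2 * N) : Ir N = 2 := by
  rw [Ir, h]
  push_cast
  field_simp

lemma three_div_cbrt_two_le_add {a b : ℝ} (ha : 0 ≤ a) (hb : 0 ≤ b) (h : 2 ≤ a * b ^ 2) :
    3 / (2 : ℝ) ^ ((1 : ℝ) / 3) ≤ a + b := by
  have hcube : (3 / (2 : ℝ) ^ ((1 : ℝ) / 3)) ^ 3 = 27 / 2 := by
    rw [div_pow, ← Real.rpow_natCast ((2 : ℝ) ^ _), ← Real.rpow_mul zero_le_two]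
    norm_num
  -- AM-GM for `a, b/2, b/2`
  have amgm : 4 * (a + b) ^ 3 - 27 * (a * b ^ 2) = (2 * a - b) ^ 2 * (a + 4 * b) := by ring
  refine le_of_pow_le_pow_left₀ three_ne_zero (by positivity) ?_
  rw [hcube]
  nlinarith [mul_nonneg (sq_nonneg (2 * a - b)) (by positivity : 0 ≤ a + 4 * b)]

theorem stmt13_general (q k n N : ℕ)
    (hq : Nat.Prime q)
    (hco : Nat.Coprime q n) (hN : N = q ^ k * n ^ 2)
    (hodd : Odd N) (hperf : sigma N = 2 * N) (hk : k = 1) :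
    Ir q * Ir n > 3 / (2 : ℝ) ^ ((1 : ℝ) / 3) - 1 := by
  subst hk hN
  rw [pow_one] at hperf hodd
  -- `N = 0` satisfies `sigma N = 2 * N` too; oddness excludes it
  have hn0 : n ≠ 0 := by
    rintro rfl
    simp at hodd
  have hn1 : 1 < n := by
    refine lt_of_le_of_ne (Nat.one_le_iff_ne_zero.2 hn0) fun h => ?_
    subst h
    rw [one_pow, mul_one] at hperf
    exact hq.not_perfect ((Nat.perfect_iff_sum_divisors_eq_two_mul hq.pos).2 hperf)
  have ha := one_lt_Ir hq.one_lt
  have hb := one_lt_Ir hn1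
  have hab : 2 ≤ Ir q * Ir n ^ 2 := by
    calc (2 : ℝ) = Ir q * Ir (n ^ 2) := by
          rw [← Ir_mul_of_coprime (hco.pow_right 2),
            Ir_eq_two_of_sigma_eq (mul_ne_zero hq.ne_zero (pow_ne_zero 2 hn0)) hperf]
      _ ≤ Ir q * Ir n ^ 2 := by gcongr; exact Ir_sq_le n
  have hsum := three_div_cbrt_two_le_add (by linarith) (by linarith) hab
  nlinarith [mul_pos (sub_pos.2 ha) (sub_pos.2 hb)]

theorem stmt13 (q k n N : ℕ)
    (hq : Nat.Prime q) (hq4 : q % 4 = 1) (hk4 : k % 4 = 1)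
    (hco : Nat.Coprime q n) (hN : N = q ^ k * n ^ 2)
    (hodd : Odd N) (hperf : sigma N = 2 * N) (hk : k = 1) :
    Ir q * Ir n > 3 / (2 : ℝ) ^ ((1 : ℝ) / 3) - 1 :=
  stmt13_general q k n N hq hco hN hodd hperf hk
end
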